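/- arXiv:2505.15006 — 5 statements merged into one kernel-verified Lean document; each statement's English description precedes it below -/
import Mathlib

section
/- Let D : H → H be a monotone bounded linear operator on a real Hilbert space H and γ > 0. Then γI + D is bijective, its inverse E := (γI + D)⁻¹ is a bounded linear operator, and E is positive definite: for all y ∈ H, ⟨Ey, y⟩ ≥ (γ/(γ + ‖D‖)²)‖y‖². -/
open RealInnerProductSpace

/-- If `D` is a monotone bounded linear operator and `γ > 0`, then `γI + D` is
bijective, its inverse `E` is a bounded linear operator, and `E` is positive definite with
`⟪E y, y⟫ ≥ (γ/(γ + ‖D‖)²) ‖y‖²` for all `y`. -/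
theorem stmt1 {H : Type*} [NormedAddCommGroup H] [InnerProductSpace ℝ H] [CompleteSpace H]
    (D : H →L[ℝ] H) (hD : ∀ x, 0 ≤ ⟪D x, x⟫) (γ : ℝ) (hγ : 0 < γ) :
    Function.Bijective (fun x => γ • x + D x) ∧
      ∃ E : H →L[ℝ] H,
        (∀ x, E (γ • x + D x) = x) ∧ (∀ y, γ • E y + D (E y) = y) ∧
          ∀ y, γ / (γ + ‖D‖) ^ 2 * ‖y‖ ^ 2 ≤ ⟪E y, y⟫ := by
  set T : H →L[ℝ] H := γ • ContinuousLinearMap.id ℝ H + D with hT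
  have hTapp : ∀ x, T x = γ • x + D x := fun x => rfl
  -- the bilinear form B x y = ⟪T x, y⟫
  set B : H →L[ℝ] H →L[ℝ] ℝ := (innerSL ℝ).comp T with hB
  have hBapp : ∀ x y, B x y = ⟪T x, y⟫ := fun x y => rfl
  have coercive : IsCoercive B := by
    refine ⟨γ, hγ, fun u => ?_⟩
    have : B u u = γ * (‖u‖ * ‖u‖) + ⟪D u, u⟫ := by
      rw [hBapp, hTapp, inner_add_left, real_inner_smul_left, real_inner_self_eq_norm_mul_norm]
    rw [this, mul_assoc]
    linarith [hD u]
  have hTeq : (coercive.continuousLinearEquivOfBilin : H →L[ℝ] H) = T := by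
    ext v
    refine ext_inner_right ℝ fun w => ?_
    rw [ContinuousLinearEquiv.coe_coe, coercive.continuousLinearEquivOfBilin_apply, hBapp]
  have hbij : Function.Bijective T := by
    rw [← hTeq]; exact coercive.continuousLinearEquivOfBilin.bijective
  have hTinv : ∀ y, T (coercive.continuousLinearEquivOfBilin.symm y) = y := by
    intro y
    rw [← hTeq]
    exact coercive.continuousLinearEquivOfBilin.apply_symm_apply y
  refine ⟨hbij, ⟨(coercive.continuousLinearEquivOfBilin.symm : H →L[ℝ] H), ?_, ?_, ?_⟩⟩
  · intro x
    show coercive.continuousLinearEquivOfBilin.symm (γ • x + D x) = x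
    have h1 : γ • x + D x = T x := rfl
    rw [h1, ← hTeq]
    exact coercive.continuousLinearEquivOfBilin.symm_apply_apply x
  · intro y
    exact hTinv y
  · intro y
    set x : H := coercive.continuousLinearEquivOfBilin.symm y with hx
    have hy : γ • x + D x = y := hTinv y
    have hinner : ⟪x, y⟫ = γ * ‖x‖ ^ 2 + ⟪D x, x⟫ := by
      rw [← hy, inner_add_right, real_inner_smul_right, real_inner_self_eq_norm_sq,
        real_inner_comm x (D x)]
    have hDpos : (0 : ℝ) ≤ ‖D‖ := norm_nonneg D
    have hnorm : ‖y‖ ≤ (γ + ‖D‖) * ‖x‖ := by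
      calc ‖y‖ = ‖γ • x + D x‖ := by rw [hy]
        _ ≤ ‖γ • x‖ + ‖D x‖ := norm_add_le _ _
        _ ≤ γ * ‖x‖ + ‖D‖ * ‖x‖ := by
            rw [norm_smul, Real.norm_eq_abs, abs_of_pos hγ]
            exact add_le_add le_rfl (D.le_opNorm x)
        _ = (γ + ‖D‖) * ‖x‖ := by ring
    have hsq : ‖y‖ ^ 2 ≤ (γ + ‖D‖) ^ 2 * ‖x‖ ^ 2 := by
      have h2 := pow_le_pow_left₀ (norm_nonneg y) hnorm 2
      calc ‖y‖ ^ 2 ≤ ((γ + ‖D‖) * ‖x‖) ^ 2 := h2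
        _ = (γ + ‖D‖) ^ 2 * ‖x‖ ^ 2 := by ring
    have hpos : (0 : ℝ) < (γ + ‖D‖) ^ 2 := by positivity
    have key : γ / (γ + ‖D‖) ^ 2 * ‖y‖ ^ 2 ≤ γ * ‖x‖ ^ 2 := by
      have h3 : γ / (γ + ‖D‖) ^ 2 * ‖y‖ ^ 2 ≤
          γ / (γ + ‖D‖) ^ 2 * ((γ + ‖D‖) ^ 2 * ‖x‖ ^ 2) :=
        mul_le_mul_of_nonneg_left hsq (by positivity)
      have h4 : γ / (γ + ‖D‖) ^ 2 * ((γ + ‖D‖) ^ 2 * ‖x‖ ^ 2) = γ * ‖x‖ ^ 2 := by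
        field_simp
      linarith
    calc γ / (γ + ‖D‖) ^ 2 * ‖y‖ ^ 2 ≤ γ * ‖x‖ ^ 2 := key
      _ ≤ ⟪x, y⟫ := by rw [hinner]; linarith [hD x]
end

section
/- Let F : H →→ H be maximal monotone, D : H → H a monotone bounded linear operator, γ > 0, and set B := (F⁻¹ + D)⁻¹ and E := (γI + D)⁻¹. Then for x, y ∈ H, y = (I + γB)⁻¹(x) if and only if y = E(γz + Dx), where z is the unique point satisfying Ex ∈ Ez + F(z) (i.e., z = (E + F)⁻¹(Ex)). -/
open RealInnerProductSpace

variable {H : Type*} [NormedAddCommGroup H] [InnerProductSpace ℝ H] [CompleteSpace H]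

/-- A set-valued operator is monotone. -/
def SVMonotone (F : H → Set H) : Prop :=
  ∀ x y u v, u ∈ F x → v ∈ F y → 0 ≤ ⟪u - v, x - y⟫

/-- The graph of a set-valued operator. -/
def SVGraph (F : H → Set H) : Set (H × H) := {p | p.2 ∈ F p.1}

/-- A set-valued operator is maximal monotone. -/
def SVMaxMonotone (F : H → Set H) : Prop :=
  SVMonotone F ∧
    ∀ G : H → Set H, SVMonotone G → SVGraph F ⊆ SVGraph G → SVGraph G = SVGraph F

/-- Lemma 1 / `comp1`: with `B := (F⁻¹ + D)⁻¹` and `E := (γI + D)⁻¹`,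
`y = (I + γB)⁻¹ x` iff `y = E (γ z + D x)` where `z = (E + F)⁻¹ (E x)`.
Membership `b ∈ B y` unfolds to `∃ u, b ∈ F u ∧ y = u + D b`, and
`y ∈ (I + γB)⁻¹ x` unfolds to `∃ b ∈ B y, x = y + γ • b`. -/
theorem stmt2 (F : H → Set H) (hF : SVMaxMonotone F)
    (D : H →L[ℝ] H) (hD : ∀ w, 0 ≤ ⟪D w, w⟫) (γ : ℝ) (hγ : 0 < γ)
    (E : H →L[ℝ] H) (hE₁ : ∀ w, E (γ • w + D w) = w) (hE₂ : ∀ w, γ • E w + D (E w) = w)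
    (x y z : H)
    (hz : E x - E z ∈ F z)
    (hzu : ∀ z', E x - E z' ∈ F z' → z' = z) :
    (∃ b u, b ∈ F u ∧ y = u + D b ∧ x = y + γ • b) ↔ y = E (γ • z + D x) := by
  have Tinj : ∀ a b : H, γ • a + D a = γ • b + D b → a = b := fun a b h => by
    have h1 := hE₁ a
    rw [h, hE₁ b] at h1
    exact h1.symm
  constructor
  · rintro ⟨b, u, hbF, hy, hx⟩
    have hbu : b = E x - E u := by
      rw [← map_sub]
      have h1 : x - u = γ • b + D b := by rw [hx, hy]; abel
      rw [h1, hE₁]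
    have hu : u = z := hzu u (by rw [← hbu]; exact hbF)
    subst hu
    refine Tinj _ _ ?_
    rw [hE₂]
    have hx2 : x = u + D b + γ • b := by rw [hx, hy]
    rw [hy, hx2]
    simp only [map_add, map_smul, smul_add]
    abel
  · intro h
    set b := E x - E z with hbdef
    have hb : γ • b + D b = x - z := by rw [hbdef, ← map_sub, hE₂]
    have hx2 : x = z + (γ • b + D b) := by rw [hb]; abel
    have hy2 : y = z + D b := by
      refine Tinj _ _ ?_
      rw [h, hE₂]
      calc γ • z + D x = γ • z + D (z + (γ • b + D b)) := by rw [← hx2]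
        _ = γ • (z + D b) + D (z + D b) := by
            simp only [map_add, map_smul, smul_add]; abel
    exact ⟨b, z, hz, hy2, by rw [hy2, hx2]; abel⟩
end

section
/- Suppose the system (f, B, C, D) is P-passive, where f : H₁ → H₁ is L_f-Lipschitz continuous, B : H₂ → H₁, C : H₁ → H₂, D : H₂ → H₂ are bounded linear operators, and P : H₁ → H₁ is a symmetric positive bounded linear operator. Then ker(D + Dᵀ) ⊆ ker(PB − Cᵀ). -/
open RealInnerProductSpace

/-- Lemma `kersub`: if the system `(f, B, C, D)` is `P`-passive with `f`
Lipschitz continuous and `P` a symmetric positive bounded linear operator, then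
`ker (D + Dᵀ) ⊆ ker (PB − Cᵀ)`. -/
theorem stmt3 {H₁ H₂ : Type*}
    [NormedAddCommGroup H₁] [InnerProductSpace ℝ H₁] [CompleteSpace H₁]
    [NormedAddCommGroup H₂] [InnerProductSpace ℝ H₂] [CompleteSpace H₂]
    (f : H₁ → H₁) (Lf : NNReal) (hf : LipschitzWith Lf f)
    (B : H₂ →L[ℝ] H₁) (C : H₁ →L[ℝ] H₂) (D : H₂ →L[ℝ] H₂) (P : H₁ →L[ℝ] H₁)
    (hPsymm : IsSelfAdjoint P) (hPpos : ∀ x, 0 ≤ ⟪P x, x⟫)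
    (hpass : ∀ x₁ x₂ : H₁, ∀ y₁ y₂ : H₂,
      0 ≤ ⟪P (f x₁ - f x₂), x₁ - x₂⟫ +
          ⟪(P.comp B - ContinuousLinearMap.adjoint C) (y₁ - y₂), x₁ - x₂⟫ +
          ⟪D (y₁ - y₂), y₁ - y₂⟫) :
    ∀ y, (D + ContinuousLinearMap.adjoint D) y = 0 →
      (P.comp B - ContinuousLinearMap.adjoint C) y = 0 := by
  intro y hy
  set M := P.comp B - ContinuousLinearMap.adjoint C with hM
  -- ⟪D y, y⟫ = 0
  have hDyy : ⟪D y, y⟫ = 0 := by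
    have h0 : ⟪(D + ContinuousLinearMap.adjoint D) y, y⟫ = 0 := by
      rw [hy, inner_zero_left]
    have hadj : ⟪(ContinuousLinearMap.adjoint D) y, y⟫ = ⟪D y, y⟫ := by
      rw [ContinuousLinearMap.adjoint_inner_left, real_inner_comm]
    simp only [ContinuousLinearMap.add_apply, inner_add_left, hadj] at h0
    linarith
  -- key inequality: for all t and x, 0 ≤ c x + t * ⟪M y, x⟫
  have key : ∀ (t : ℝ) (x : H₁),
      0 ≤ ⟪P (f x - f 0), x⟫ + t * ⟪M y, x⟫ := by
    intro t x
    have h := hpass x 0 (t • y) 0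
    simp only [sub_zero] at h
    rw [map_smul] at h
    have h2 : ⟪D (t • y), t • y⟫ = 0 := by
      rw [map_smul, real_inner_smul_left, real_inner_smul_right, hDyy]
      ring
    rw [h2, real_inner_smul_left] at h
    linarith
  -- specialize to x = M y
  set x := M y
  set c := ⟪P (f x - f 0), x⟫ with hc
  have ha : (0 : ℝ) ≤ ⟪M y, x⟫ := real_inner_self_nonneg
  by_contra hne
  have hapos : (0 : ℝ) < ⟪M y, x⟫ := by
    rcases lt_or_eq_of_le ha with h | h
    · exact h
    · exact absurd (inner_self_eq_zero.mp h.symm) hne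
  have := key (-(c + 1) / ⟪M y, x⟫) x
  rw [div_mul_cancel₀ _ (ne_of_gt hapos)] at this
  linarith
end

section
/- If f : H → H is μ-strongly monotone and L-Lipschitz continuous and D : H → H is a monotone bounded linear operator, then g := f⁻¹ + D is (μ/L²)-strongly monotone and (1/μ + ‖D‖)-Lipschitz continuous, and hence g⁻¹ = (f⁻¹ + D)⁻¹ is single-valued, strongly monotone, and Lipschitz continuous on its domain. -/
open RealInnerProductSpace

/-- if `f` is `μ`-strongly monotone and `L`-Lipschitz and `D` is monotone
bounded linear, then `g := f⁻¹ + D` is `(μ/L²)`-strongly monotone and `(1/μ + ‖D‖)`-Lipschitz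
(expressed on the range of `f`, where `g (f x) = x + D (f x)`), hence
`g⁻¹ = (f⁻¹ + D)⁻¹` is single-valued, strongly monotone, and Lipschitz on its domain. -/
theorem stmt11 {H : Type*} [NormedAddCommGroup H] [InnerProductSpace ℝ H]
    (f : H → H) (μ L : ℝ) (hμ : 0 < μ) (hL : 0 < L)
    (hmono : ∀ x y, μ * ‖x - y‖ ^ 2 ≤ ⟪f x - f y, x - y⟫)
    (hlip : ∀ x y, ‖f x - f y‖ ≤ L * ‖x - y‖)
    (D : H →L[ℝ] H) (hD : ∀ w, 0 ≤ ⟪D w, w⟫) :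
    (∀ x y, μ / L ^ 2 * ‖f x - f y‖ ^ 2 ≤
        ⟪(x + D (f x)) - (y + D (f y)), f x - f y⟫) ∧
    (∀ x y, ‖(x + D (f x)) - (y + D (f y))‖ ≤ (1 / μ + ‖D‖) * ‖f x - f y‖) ∧
    (∀ x y, x + D (f x) = y + D (f y) → f x = f y) ∧
    (∃ μ' > (0 : ℝ), ∀ x y,
      μ' * ‖(x + D (f x)) - (y + D (f y))‖ ^ 2 ≤
        ⟪f x - f y, (x + D (f x)) - (y + D (f y))⟫) ∧
    (∃ L' > (0 : ℝ), ∀ x y,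
      ‖f x - f y‖ ≤ L' * ‖(x + D (f x)) - (y + D (f y))‖) := by
  have hveq : ∀ x y : H, (x + D (f x)) - (y + D (f y)) = (x - y) + D (f x - f y) := by
    intro x y; rw [map_sub]; abel
  have key1 : ∀ x y, μ / L ^ 2 * ‖f x - f y‖ ^ 2 ≤
      ⟪(x + D (f x)) - (y + D (f y)), f x - f y⟫ := by
    intro x y
    rw [hveq, inner_add_left]
    have h1 : μ * ‖x - y‖ ^ 2 ≤ ⟪x - y, f x - f y⟫ := by
      rw [real_inner_comm]; exact hmono x y
    have h2 : 0 ≤ ⟪D (f x - f y), f x - f y⟫ := hD _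
    have h3 : ‖f x - f y‖ ^ 2 ≤ L ^ 2 * ‖x - y‖ ^ 2 := by
      nlinarith [hlip x y, norm_nonneg (f x - f y), norm_nonneg (x - y)]
    have h4 : μ / L ^ 2 * ‖f x - f y‖ ^ 2 ≤ μ * ‖x - y‖ ^ 2 := by
      rw [div_mul_eq_mul_div, div_le_iff₀ (by positivity)]
      nlinarith
    linarith
  have hxy : ∀ x y : H, ‖x - y‖ ≤ (1 / μ) * ‖f x - f y‖ := by
    intro x y
    have h1 := hmono x y
    have h2 : ⟪f x - f y, x - y⟫ ≤ ‖f x - f y‖ * ‖x - y‖ := real_inner_le_norm _ _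
    rcases eq_or_ne x y with rfl | hne
    · simp
    · have hpos : 0 < ‖x - y‖ := by
        simpa [sub_eq_zero] using norm_pos_iff.mpr (sub_ne_zero.mpr hne)
      rw [one_div, inv_mul_eq_div, le_div_iff₀ hμ]
      nlinarith
  have key2 : ∀ x y, ‖(x + D (f x)) - (y + D (f y))‖ ≤ (1 / μ + ‖D‖) * ‖f x - f y‖ := by
    intro x y
    rw [hveq]
    calc ‖(x - y) + D (f x - f y)‖ ≤ ‖x - y‖ + ‖D (f x - f y)‖ := norm_add_le _ _
      _ ≤ (1 / μ) * ‖f x - f y‖ + ‖D‖ * ‖f x - f y‖ :=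
          add_le_add (hxy x y) (D.le_opNorm _)
      _ = (1 / μ + ‖D‖) * ‖f x - f y‖ := by ring
  refine ⟨key1, key2, ?_, ?_, ?_⟩
  · intro x y h
    have h1 := key1 x y
    rw [h, sub_self, inner_zero_left] at h1
    have : ‖f x - f y‖ ^ 2 ≤ 0 := by
      have hc : 0 < μ / L ^ 2 := by positivity
      nlinarith [sq_nonneg ‖f x - f y‖]
    have : ‖f x - f y‖ = 0 := by nlinarith [sq_nonneg ‖f x - f y‖, norm_nonneg (f x - f y)]
    rwa [norm_eq_zero, sub_eq_zero] at this
  · have hC : 0 < 1 / μ + ‖D‖ := by positivity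
    refine ⟨(μ / L ^ 2) / (1 / μ + ‖D‖) ^ 2, by positivity, ?_⟩
    intro x y
    have h1 := key1 x y
    have h2 := key2 x y
    have h3 : ‖(x + D (f x)) - (y + D (f y))‖ ^ 2 ≤ (1 / μ + ‖D‖) ^ 2 * ‖f x - f y‖ ^ 2 := by
      nlinarith [norm_nonneg ((x + D (f x)) - (y + D (f y))), norm_nonneg (f x - f y)]
    rw [real_inner_comm]
    have hc : 0 < μ / L ^ 2 := by positivity
    rw [div_mul_eq_mul_div, div_le_iff₀ (by positivity)]
    nlinarith
  · refine ⟨L ^ 2 / μ, by positivity, ?_⟩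
    intro x y
    have h1 := key1 x y
    have h2 : ⟪(x + D (f x)) - (y + D (f y)), f x - f y⟫ ≤
        ‖(x + D (f x)) - (y + D (f y))‖ * ‖f x - f y‖ := real_inner_le_norm _ _
    rcases eq_or_ne (f x) (f y) with hfe | hne
    · simp [hfe]; positivity
    · have hpos : 0 < ‖f x - f y‖ := norm_pos_iff.mpr (sub_ne_zero.mpr hne)
      have hc : 0 < μ / L ^ 2 := by positivity
      rw [div_mul_eq_mul_div, le_div_iff₀ hμ]
      have : μ / L ^ 2 * ‖f x - f y‖ ≤ ‖(x + D (f x)) - (y + D (f y))‖ := by nlinarith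
      calc ‖f x - f y‖ * μ = (μ / L ^ 2 * ‖f x - f y‖) * L ^ 2 := by field_simp
        _ ≤ ‖(x + D (f x)) - (y + D (f y))‖ * L ^ 2 := by nlinarith
        _ = L ^ 2 * ‖(x + D (f x)) - (y + D (f y))‖ := by ring
end

section
/- For each player i ∈ {1,…,m} with cost gᵢ(xⁱ, x⁻ⁱ) = ⟨gᵢ₁(x⁻ⁱ), xⁱ⟩ + gᵢ₂(x⁻ⁱ) and constraint set Cⁱ(x⁻ⁱ) = Kᵢ − cᵢ gᵢ₁(x⁻ⁱ) with Kᵢ ⊆ ℝⁿ closed convex and cᵢ ≥ 0, a point x = (x¹,…,xᵐ) is a Nash quasi-equilibrium (each xⁱ minimizes gᵢ(·, x⁻ⁱ) over Cⁱ(x⁻ⁱ)) if and only if 0 ∈ f(x) + N_Ω(x + D f(x)), where f(x) = (g₁₁(x⁻¹),…,g_{m1}(x⁻ᵐ)), Ω = ∏ᵢ Kᵢ, and D = diag(c₁,…,c_m) acting blockwise. -/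
open RealInnerProductSpace

/-- The normal cone to a set `Ω` at a point `x` (empty if `x ∉ Ω`). -/
def normalCone {H : Type*} [NormedAddCommGroup H] [InnerProductSpace ℝ H]
    (Ω : Set H) (x : H) : Set H :=
  {v | x ∈ Ω ∧ ∀ y ∈ Ω, ⟪v, y - x⟫ ≤ 0}

/-- Example 1: with separable costs `gᵢ(xⁱ, x⁻ⁱ) = ⟨gᵢ₁(x⁻ⁱ), xⁱ⟩ + gᵢ₂(x⁻ⁱ)`
and constraint sets `Cⁱ(x⁻ⁱ) = Kᵢ − cᵢ gᵢ₁(x⁻ⁱ)`, a strategy profile `x` is a Nash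
quasi-equilibrium iff `0 ∈ f(x) + N_Ω(x + D f(x))` with `f(x) = (g₁₁(x⁻¹),…,g_{m1}(x⁻ᵐ))`,
`Ω = ∏ᵢ Kᵢ` and `D = diag(c₁,…,c_m)` acting blockwise. -/
theorem stmt17 (n m : ℕ)
    (g1 : Fin m → ((Fin m) → EuclideanSpace ℝ (Fin n)) → EuclideanSpace ℝ (Fin n))
    (hg1 : ∀ i x x', (∀ j, j ≠ i → x j = x' j) → g1 i x = g1 i x')
    (g2 : Fin m → ((Fin m) → EuclideanSpace ℝ (Fin n)) → ℝ)
    (hg2 : ∀ i x x', (∀ j, j ≠ i → x j = x' j) → g2 i x = g2 i x')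
    (K : Fin m → Set (EuclideanSpace ℝ (Fin n)))
    (hKne : ∀ i, (K i).Nonempty) (hKconv : ∀ i, Convex ℝ (K i))
    (hKcl : ∀ i, IsClosed (K i))
    (c : Fin m → ℝ) (hc : ∀ i, 0 ≤ c i)
    (x : (Fin m) → EuclideanSpace ℝ (Fin n)) :
    (∀ i : Fin m,
        x i ∈ {s | ∃ k ∈ K i, s = k - c i • g1 i x} ∧
        ∀ z ∈ {s | ∃ k ∈ K i, s = k - c i • g1 i x},
          ⟪g1 i x, x i⟫ + g2 i x ≤ ⟪g1 i x, z⟫ + g2 i x) ↔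
      ((WithLp.toLp 2 (-(fun i => g1 i x)) : PiLp 2 fun _ : Fin m => EuclideanSpace ℝ (Fin n)) ∈
        normalCone {v : PiLp 2 fun _ : Fin m => EuclideanSpace ℝ (Fin n) | ∀ i, v i ∈ K i}
          (WithLp.toLp 2 (fun i => x i + c i • g1 i x) :
            PiLp 2 fun _ : Fin m => EuclideanSpace ℝ (Fin n))) := by
  constructor
  · intro h
    constructor
    · intro i
      obtain ⟨⟨k, hk, hxk⟩, _⟩ := h i
      have hk' : x i + c i • g1 i x = k := by rw [hxk]; abel
      show x i + c i • g1 i x ∈ K i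
      rw [hk']; exact hk
    · intro y hy
      rw [PiLp.inner_apply]
      apply Finset.sum_nonpos
      intro i _
      obtain ⟨_, hmin⟩ := h i
      have hz : y i - c i • g1 i x ∈ {s | ∃ k ∈ K i, s = k - c i • g1 i x} :=
        ⟨y i, hy i, rfl⟩
      have h1 := hmin _ hz
      simp only [inner_sub_right, inner_add_right, inner_smul_right, inner_neg_left,
        Pi.neg_apply, PiLp.sub_apply, PiLp.toLp_apply, real_inner_self_eq_norm_sq] at h1 ⊢
      linarith
  · rintro ⟨hmem, hnc⟩ i
    refine ⟨⟨x i + c i • g1 i x, hmem i, by abel⟩, ?_⟩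
    rintro z ⟨k, hk, rfl⟩
    set p : PiLp 2 fun _ : Fin m => EuclideanSpace ℝ (Fin n) :=
      WithLp.toLp 2 (fun i => x i + c i • g1 i x) with hp
    set q : PiLp 2 fun _ : Fin m => EuclideanSpace ℝ (Fin n) :=
      WithLp.toLp 2 (Function.update p.ofLp i k) with hq
    have hy : q ∈
        {v : PiLp 2 fun _ : Fin m => EuclideanSpace ℝ (Fin n) | ∀ i, v i ∈ K i} := by
      intro j
      rcases eq_or_ne j i with rfl | hj
      · simpa [hq] using hk
      · simpa [hq, Function.update_of_ne hj] using hmem j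
    have h1 := hnc _ hy
    rw [PiLp.inner_apply] at h1
    have h2 : ∀ j ∈ Finset.univ, j ≠ i →
        ⟪(WithLp.toLp 2 (-(fun i => g1 i x)) : PiLp 2 fun _ : Fin m => EuclideanSpace ℝ (Fin n)) j,
          (q - p) j⟫ = 0 := by
      intro j _ hj
      simp [hq, PiLp.sub_apply, Function.update_of_ne hj]
    rw [Finset.sum_eq_single_of_mem i (Finset.mem_univ i) h2] at h1
    simp only [hq, PiLp.toLp_apply, Function.update_self, PiLp.sub_apply, Pi.neg_apply, inner_neg_left,
      inner_sub_right, inner_add_right, inner_smul_right, hp] at h1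
    simp only [inner_sub_right, inner_smul_right, real_inner_self_eq_norm_sq] at h1 ⊢
    linarith
end
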